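/- Suppose A ≡_wtt B via wtt-operators with use bounded by a monotone computable function f satisfying f(x) > x, A ∩ B = ∅, only finitely many x satisfy (x, f(x)] ⊆ A ∪ B, and k is such that no x ≥ k has (x, f(x)] ⊆ A ∪ B. Define m₀ = k and m_{i+1} = f(m_i). Then for every C ≥_T A, the set Z defined by: Z agrees with A on (m_n, m_{n+1}] if n ∉ C, and Z agrees with the complement of B on (m_n, m_{n+1}] if n ∈ C, is a separator of A and B with Z ≡_T C. -/

import Mathlib

open Classical

/-- The characteristic function (into `ℕ`) of a set of naturals, as a partial function,
used as an oracle. -/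
noncomputable def chi (A : Set ℕ) : ℕ →. ℕ :=
  fun n => Part.some (if n ∈ A then 1 else 0)

/-- The characteristic function (into `Bool`) of a set of naturals. -/
noncomputable def chib (A : Set ℕ) : ℕ → Bool :=
  fun n => decide (n ∈ A)

/-- Codes for oracle Turing machines: partial recursive functions relative to an oracle. -/
inductive OCode : Type
  | zero | succ | left | right | oracle
  | pair : OCode → OCode → OCode
  | comp : OCode → OCode → OCode
  | prec : OCode → OCode → OCode
  | rfind' : OCode → OCode

/-- Evaluation of an oracle machine code relative to the oracle `g`. -/
def OCode.eval (g : ℕ →. ℕ) : OCode → ℕ →. ℕ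
  | .zero => pure 0
  | .succ => fun n => Part.some (n + 1)
  | .left => fun n => Part.some (Nat.unpair n).1
  | .right => fun n => Part.some (Nat.unpair n).2
  | .oracle => g
  | .pair cf cg => fun n => Nat.pair <$> OCode.eval g cf n <*> OCode.eval g cg n
  | .comp cf cg => fun n => OCode.eval g cg n >>= OCode.eval g cf
  | .prec cf cg =>
    Nat.unpaired fun a n =>
      n.rec (OCode.eval g cf a) fun y IH => do
        let i ← IH
        OCode.eval g cg (Nat.pair a (Nat.pair y i))
  | .rfind' cf =>
    Nat.unpaired fun a m =>
      (Nat.rfind fun n => (fun m => m = 0) <$> OCode.eval g cf (Nat.pair a (n + m))).map (· + m)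

/-- An enumeration of the oracle machine codes by natural numbers. -/
def OCode.ofNat : ℕ → OCode
  | 0 => .zero
  | 1 => .succ
  | 2 => .left
  | 3 => .right
  | 4 => .oracle
  | n + 5 =>
    let m := n.div2.div2
    have hm : m < n + 5 := by
      simp only [m, Nat.div2_val]
      exact
        lt_of_le_of_lt (le_trans (Nat.div_le_self _ _) (Nat.div_le_self _ _))
          (Nat.lt_succ_of_le (Nat.le_add_right _ _))
    have _m1 : m.unpair.1 < n + 5 := lt_of_le_of_lt m.unpair_left_le hm
    have _m2 : m.unpair.2 < n + 5 := lt_of_le_of_lt m.unpair_right_le hm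
    match n.bodd, n.div2.bodd with
    | false, false => .pair (OCode.ofNat m.unpair.1) (OCode.ofNat m.unpair.2)
    | false, true  => .comp (OCode.ofNat m.unpair.1) (OCode.ofNat m.unpair.2)
    | true , false => .prec (OCode.ofNat m.unpair.1) (OCode.ofNat m.unpair.2)
    | true , true  => .rfind' (OCode.ofNat m)
decreasing_by
  all_goals
    first
    | exact Nat.le_of_lt_succ _m1
    | exact Nat.le_of_lt_succ _m2
    | exact Nat.le_of_lt_succ hm
    | exact _m1
    | exact _m2
    | exact hm
    | (simp_wf; omega)

/-- `B` is Turing reducible to `A`: some oracle machine with oracle (the characteristic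
function of) `A` computes the characteristic function of `B`. -/
def SetTuringReducible (B A : Set ℕ) : Prop :=
  ∃ c : OCode, ∀ n, OCode.eval (chi A) c n = Part.some (if n ∈ B then 1 else 0)

/-- Turing equivalence of sets of naturals. -/
def TuringEquiv (A B : Set ℕ) : Prop :=
  SetTuringReducible A B ∧ SetTuringReducible B A

/-- A set of naturals is computably enumerable iff it is the domain of a partial
computable function. -/
def CE (A : Set ℕ) : Prop :=
  ∃ c : Nat.Partrec.Code, A = { n | (c.eval n).Dom }

/-- A set has c.e. (Turing) degree iff it is Turing equivalent to a c.e. set. -/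
def CEDegree (X : Set ℕ) : Prop :=
  ∃ W : Set ℕ, CE W ∧ TuringEquiv X W

/-- The halting problem `∅′`. -/
def HaltingSet : Set ℕ :=
  { e | ((Denumerable.ofNat Nat.Partrec.Code e).eval e).Dom }

/-- The `e`-th computably enumerable set `W_e`. -/
def WSet (e : ℕ) : Set ℕ :=
  { n | ((Denumerable.ofNat Nat.Partrec.Code e).eval n).Dom }

/-- `B` is weak truth table reducible to `A` with use bound `f`: a partial computable
functional, given `x` and the first `f x` bits of `A`, converges to `B(x)`. -/
def WttReducibleWith (f : ℕ → ℕ) (B A : Set ℕ) : Prop :=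
  ∃ F : ℕ → List Bool →. Bool, Partrec₂ F ∧
    ∀ x, F x ((List.range (f x)).map (chib A)) = Part.some (chib B x)

/-- Weak truth table reducibility: Turing reducibility with computably bounded use. -/
def WttReducible (B A : Set ℕ) : Prop :=
  ∃ f : ℕ → ℕ, Computable f ∧ WttReducibleWith f B A

/-- A `Π⁰₁` class: the set of infinite paths through a computable binary tree. -/
def Pi01Class (P : Set (Set ℕ)) : Prop :=
  ∃ T : List Bool → Bool, Computable T ∧
    ∀ Z : Set ℕ, Z ∈ P ↔ ∀ n, T ((List.range n).map (chib Z)) = true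

/-- A `Σ⁰₄` set of naturals: a four-quantifier form over a computable matrix. -/
def Sigma04 (S : Set ℕ) : Prop :=
  ∃ R : ℕ × ℕ × ℕ × ℕ × ℕ → Bool, Computable R ∧
    ∀ e, e ∈ S ↔ ∃ a, ∀ b, ∃ c, ∀ d, R (e, a, b, c, d) = true

/-!
`Z ≤_T C`: from `C` we compute `A`, hence the first `f x` bits of `A`, hence `B(x)` through the
wtt-reduction; the index of the block containing `x` is computable, and one query to `C` says
whether `Z` copies `A` or `Bᶜ` there.

`C ≤_T Z`: the block `(m n, m (n + 1)]` contains some `y ∉ A ∪ B`. Read `Z` on the block and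
enumerate `A` and `B` until either every element of `Z` in the block has appeared in `A`, or every
non-element has appeared in `B`. The side on which `Z` copies `A` resp. `Bᶜ` eventually succeeds;
the other never does, because `y` is a non-element of `Z` outside `B` in the first case and an
element of `Z` outside `A` in the second. So the side that succeeds first tells whether `n ∈ C`.
-/

open Encodable

namespace OCode

def ofCode : Nat.Partrec.Code → OCode
  | .zero => .zero
  | .succ => .succ
  | .left => .left
  | .right => .right
  | .pair cf cg => .pair (ofCode cf) (ofCode cg)
  | .comp cf cg => .comp (ofCode cf) (ofCode cg)
  | .prec cf cg => .prec (ofCode cf) (ofCode cg)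
  | .rfind' cf => .rfind' (ofCode cf)

theorem eval_ofCode (g : ℕ →. ℕ) (c : Nat.Partrec.Code) : (ofCode c).eval g = c.eval := by
  induction c with
  | zero | succ | left | right => rfl
  | pair cf cg ihf ihg | comp cf cg ihf ihg | prec cf cg ihf ihg =>
    simp only [ofCode, OCode.eval, Nat.Partrec.Code.eval, ihf, ihg]; rfl
  | rfind' cf ih => simp only [ofCode, OCode.eval, Nat.Partrec.Code.eval, ih]; rfl

end OCode

def OPartrec (g φ : ℕ →. ℕ) : Prop := ∃ c : OCode, c.eval g = φ

def OComputable {α : Type*} [Primcodable α] (g : ℕ →. ℕ) (a : ℕ → α) : Prop :=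
  OPartrec g fun x => Part.some (encode (a x))

namespace OPartrec

variable {g φ ψ : ℕ →. ℕ}

theorem of_partrec (h : Nat.Partrec φ) : OPartrec g φ :=
  let ⟨c, hc⟩ := Nat.Partrec.Code.exists_code.1 h
  ⟨OCode.ofCode c, by rw [OCode.eval_ofCode, hc]⟩

theorem comp (hφ : OPartrec g φ) (hψ : OPartrec g ψ) : OPartrec g fun n => ψ n >>= φ :=
  let ⟨cf, hf⟩ := hφ; let ⟨cg, hg⟩ := hψ; ⟨.comp cf cg, hf ▸ hg ▸ rfl⟩

theorem pair (hφ : OPartrec g φ) (hψ : OPartrec g ψ) :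
    OPartrec g fun n => Nat.pair <$> φ n <*> ψ n :=
  let ⟨cf, hf⟩ := hφ; let ⟨cg, hg⟩ := hψ; ⟨.pair cf cg, hf ▸ hg ▸ rfl⟩

theorem prec (hφ : OPartrec g φ) (hψ : OPartrec g ψ) :
    OPartrec g (Nat.unpaired fun a n =>
      n.rec (φ a) fun y IH => IH >>= fun i => ψ (Nat.pair a (Nat.pair y i))) :=
  let ⟨cf, hf⟩ := hφ; let ⟨cg, hg⟩ := hψ; ⟨.prec cf cg, hf ▸ hg ▸ rfl⟩

theorem comp_computable (hφ : OPartrec g φ) {h : ℕ → ℕ} (hh : Computable h) :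
    OPartrec g fun n => φ (h n) := by
  have hcomp := comp hφ (of_partrec (g := g) (Partrec.nat_iff.1 hh.partrec))
  exact (funext fun n => Part.bind_some (h n) φ : (fun n => Part.some (h n) >>= φ) = _) ▸ hcomp

theorem map_partrec {α σ : Type*} [Primcodable α] [Primcodable σ] {G : α →. σ} (hG : Partrec G)
    {a : ℕ → α} (ha : OComputable g a) : OPartrec g fun x => (G (a x)).map encode := by
  simpa [encodek] using comp (of_partrec hG) ha

end OPartrec

namespace OComputable

variable {α β σ : Type*} [Primcodable α] [Primcodable β] [Primcodable σ] {g : ℕ →. ℕ}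

theorem id : OComputable g (fun x : ℕ => x) := OPartrec.of_partrec Nat.Partrec.some

theorem pair {a : ℕ → α} {b : ℕ → β} (ha : OComputable g a) (hb : OComputable g b) :
    OComputable g fun x => (a x, b x) := by
  simpa [OComputable, Seq.seq] using OPartrec.pair ha hb

theorem comp {a : ℕ → α} (ha : OComputable g a) {h : α → σ} (hh : Computable h) :
    OComputable g fun x => h (a x) := by
  simpa [OComputable] using OPartrec.map_partrec hh.partrec ha

theorem comp_computable {a : ℕ → α} (ha : OComputable g a) {h : ℕ → ℕ} (hh : Computable h) :
    OComputable g fun x => a (h x) :=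
  OPartrec.comp_computable ha hh

end OComputable

noncomputable def prefixBits (S : Set ℕ) (t : ℕ) : List Bool := (List.range t).map (chib S)

theorem prefixBits_succ (S : Set ℕ) (t : ℕ) :
    prefixBits S (t + 1) = prefixBits S t ++ [chib S t] := by
  simp [prefixBits, List.range_succ]

theorem length_prefixBits (S : Set ℕ) (t : ℕ) : (prefixBits S t).length = t := by
  simp [prefixBits]

theorem getD_prefixBits {S : Set ℕ} {t y : ℕ} (h : y < t) :
    (prefixBits S t).getD y false = chib S y := by
  simp [prefixBits, List.getD_eq_getElem?_getD, List.getElem?_range h]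

theorem OComputable.prefixBits {g : ℕ →. ℕ} {S : Set ℕ} (hS : OComputable g (chib S)) :
    OComputable g (prefixBits S) := by
  have hproj₁ : Computable fun v : ℕ => v.unpair.2.unpair.1 :=
    (Primrec.fst.comp (Primrec.unpair.comp (Primrec.snd.comp Primrec.unpair))).to_comp
  have hproj₂ : Computable fun v : ℕ => v.unpair.2.unpair.2 :=
    (Primrec.snd.comp (Primrec.unpair.comp (Primrec.snd.comp Primrec.unpair))).to_comp
  -- the step of the recursion reads `v = ⟪a, y, i⟫`, where `i` codes the first `y` bits
  have hstep : OComputable g fun v : ℕ =>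
      (decode (α := List Bool) v.unpair.2.unpair.2).getD [] ++ [chib S v.unpair.2.unpair.1] :=
    (OComputable.id.comp_computable hproj₂).pair (hS.comp_computable hproj₁)
    |>.comp (Primrec.list_append.comp
      (Primrec.option_getD.comp (Primrec.decode.comp Primrec.fst) (Primrec.const []))
      (Primrec.list_cons.comp Primrec.snd (Primrec.const []))).to_comp
  have hrec := OPartrec.prec (OPartrec.of_partrec (g := g)
    (Partrec.nat_iff.1 (Computable.const (encode ([] : List Bool))).partrec)) hstep
  have hbits : OPartrec g fun t => Part.some (encode (_root_.prefixBits S t.unpair.2)) := by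
    refine (congrArg (OPartrec g) ?_).mp hrec
    funext t
    simp only [Nat.unpaired]
    generalize t.unpair.1 = a
    induction t.unpair.2 with
    | zero => simp [_root_.prefixBits]
    | succ n ih =>
      show (Nat.rec _ _ n : Part ℕ).bind _ = _
      rw [ih]
      simp [prefixBits_succ, encodek]
  simpa [OComputable] using
    hbits.comp_computable (Primrec₂.natPair.comp (Primrec.const 0) Primrec.id).to_comp

theorem SetTuringReducible.refl (X : Set ℕ) : SetTuringReducible X X := ⟨.oracle, fun _ => rfl⟩

theorem SetTuringReducible.oComputable {S X : Set ℕ} (h : SetTuringReducible S X) :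
    OComputable (chi X) (chib S) := by
  obtain ⟨c, hc⟩ := h
  refine ⟨c, funext fun n => ?_⟩
  by_cases hn : n ∈ S <;> simp [hc, chib, hn]

theorem SetTuringReducible.of_partrec {X Y : Set ℕ} {α : Type*} [Primcodable α] {a : ℕ → α}
    (ha : OComputable (chi X) a) {G : α →. Bool} (hG : Partrec G)
    (hY : ∀ x, G (a x) = Part.some (chib Y x)) : SetTuringReducible Y X := by
  obtain ⟨c, hc⟩ := OPartrec.map_partrec hG ha
  refine ⟨c, fun x => ?_⟩
  by_cases hx : x ∈ Y <;> simp [hc, hY, chib, hx]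

theorem Computable.of_succ_eq {f m : ℕ → ℕ} (hf : Computable f) (hm : ∀ i, m (i + 1) = f (m i)) :
    Computable m :=
  (Computable.nat_rec Computable.id (Computable.const (m 0))
    (hf.comp (Computable.snd.comp Computable.snd)).to₂).of_eq fun n => by
      induction n with
      | zero => rfl
      | succ n ih => exact (congrArg f ih).trans (hm n).symm

theorem Nat.rfind_decide_eq_some_find {p : ℕ → Prop} [DecidablePred p] (h : ∃ n, p n) :
    Nat.rfind (fun n => Part.some (decide (p n))) = Part.some (Nat.find h) :=
  Part.eq_some_iff.2 <| Nat.mem_rfind.2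
    ⟨by simpa using Nat.find_spec h, fun hlt => by simpa using Nat.find_min h hlt⟩

theorem Computable.nat_find {α : Type*} [Primcodable α] {p : α → ℕ → Prop}
    [∀ a, DecidablePred (p a)] (hp : Computable₂ fun a n => decide (p a n)) (h : ∀ a, ∃ n, p a n) :
    Computable fun a => Nat.find (h a) :=
  (Partrec.rfind hp.partrec₂).of_eq_tot fun a => by
    show _ ∈ Nat.rfind fun n => Part.some _
    rw [Nat.rfind_decide_eq_some_find (h a)]; exact Part.mem_some _

theorem StrictMono.exists_computable_blockIndex {m : ℕ → ℕ} (hm : StrictMono m)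
    (hmc : Computable m) :
    ∃ N : ℕ → ℕ, Computable N ∧ ∀ x, m 0 < x → x ∈ Set.Ioc (m (N x)) (m (N x + 1)) := by
  have h : ∀ x, ∃ n, x ≤ m (n + 1) := fun x => ⟨x, (hm.id_le x).trans (hm.monotone x.le_succ)⟩
  refine ⟨fun x => Nat.find (h x), Computable.nat_find ?_ h, fun x hx => ⟨?_, Nat.find_spec (h x)⟩⟩
  · exact (Primrec.nat_le.decide.to_comp.comp Computable.fst
      (hmc.comp (Computable.succ.comp Computable.snd))).to₂
  · show m (Nat.find (h x)) < x
    rcases hN : Nat.find (h x) with _ | j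
    · exact hx
    · simpa using Nat.find_min (h x) (hN ▸ j.lt_succ_self : j < Nat.find (h x))

theorem Nat.Partrec.Code.exists_forall_lt_evaln_isSome_iff {c : Nat.Partrec.Code}
    {P : ℕ → Prop} {N : ℕ} :
    (∃ s, ∀ y < N, P y → (c.evaln s y).isSome) ↔ ∀ y < N, P y → (c.eval y).Dom := by
  constructor
  · rintro ⟨s, hs⟩ y hy hPy
    obtain ⟨x, hx⟩ := Option.isSome_iff_exists.1 (hs y hy hPy)
    exact Part.dom_iff_mem.2 ⟨x, evaln_sound hx⟩
  · intro h
    have hev : ∀ y ∈ Finset.range N, ∀ᶠ s in Filter.atTop, P y → (c.evaln s y).isSome := by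
      intro y hy
      rw [Finset.mem_range] at hy
      by_cases hPy : P y
      · obtain ⟨x, hx⟩ := Part.dom_iff_mem.1 (h y hy hPy)
        obtain ⟨s₀, hs₀⟩ := evaln_complete.1 hx
        filter_upwards [Filter.eventually_ge_atTop s₀] with s hs _
        exact Option.isSome_iff_exists.2 ⟨x, evaln_mono hs hs₀⟩
      · exact Filter.Eventually.of_forall fun _ h => absurd h hPy
    simpa using ((Finset.range N).eventually_all.2 hev).exists

noncomputable def race (P Q : ℕ → Prop) : Part Bool :=
  (Nat.rfind fun s => Part.some (decide (P s ∨ Q s))).map fun s => decide (P s)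

theorem race_eq {P Q : ℕ → Prop} (h : ∃ s, P s ∨ Q s) :
    race P Q = Part.some (decide (P (Nat.find h))) := by
  rw [race, Nat.rfind_decide_eq_some_find h, Part.map_some]

theorem race_eq_true {P Q : ℕ → Prop} (hP : ∃ s, P s) (hQ : ∀ s, ¬ Q s) :
    race P Q = Part.some true := by
  have h : ∃ s, P s ∨ Q s := hP.imp fun _ => Or.inl
  simpa [race_eq h] using (Nat.find_spec h).resolve_right (hQ _)

theorem race_eq_false {P Q : ℕ → Prop} (hQ : ∃ s, Q s) (hP : ∀ s, ¬ P s) :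
    race P Q = Part.some false := by
  simp [race_eq (hQ.imp fun _ => Or.inr), hP]

theorem Partrec.race {α : Type*} [Primcodable α] {P Q : α → ℕ → Prop} (hP : PrimrecRel P)
    (hQ : PrimrecRel Q) : Partrec fun a => _root_.race (P a) (Q a) :=
  (Partrec.rfind (hP.or hQ).decide.to_comp.to₂.partrec₂).map hP.decide.to_comp

def BlockEnumerated (c : Nat.Partrec.Code) (b : Bool) (lo : ℕ) (σ : List Bool) (s : ℕ) : Prop :=
  ∀ y < σ.length, lo < y ∧ σ.getD y false = b → (c.evaln s y).isSome

theorem primrecRel_blockEnumerated (c : Nat.Partrec.Code) (b : Bool) :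
    PrimrecRel fun (p : ℕ × List Bool) s => BlockEnumerated c b p.1 p.2 s := by
  have hbody : PrimrecRel fun (y : ℕ) (q : (ℕ × List Bool) × ℕ) =>
      ¬ (q.1.1 < y ∧ q.1.2.getD y false = b) ∨ (c.evaln q.2 y).isSome := by
    refine ((Primrec.nat_lt.comp (Primrec.fst.comp (Primrec.fst.comp Primrec.snd)) Primrec.fst).and
      (Primrec.eq.comp ((Primrec.list_getD false).comp
        (Primrec.snd.comp (Primrec.fst.comp Primrec.snd)) Primrec.fst) (Primrec.const b))).not.or
      (Primrec.eq.comp (Primrec.option_isSome.comp (Nat.Partrec.Code.primrec_evaln.comp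
        (((Primrec.snd.comp Primrec.snd).pair (Primrec.const c)).pair Primrec.fst)))
        (Primrec.const true))
  refine (hbody.forall_mem_list.comp
    (Primrec.list_range.comp (Primrec.list_length.comp (Primrec.snd.comp Primrec.fst)))
    Primrec.id).of_eq fun q => ?_
  simp only [BlockEnumerated, List.mem_range, imp_iff_not_or, id]

theorem exists_blockEnumerated_prefixBits_iff {c : Nat.Partrec.Code} {b : Bool} {S : Set ℕ}
    {lo hi : ℕ} :
    (∃ s, BlockEnumerated c b lo (prefixBits S (hi + 1)) s) ↔
      ∀ y ∈ Set.Ioc lo hi, chib S y = b → (c.eval y).Dom := by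
  simp only [BlockEnumerated, length_prefixBits]
  rw [Nat.Partrec.Code.exists_forall_lt_evaln_isSome_iff]
  refine forall_congr' fun y => ⟨fun h hy => ?_, fun h hy hlo => ?_⟩
  · intro hyS
    exact h (Nat.lt_succ_of_le hy.2) ⟨hy.1, by rwa [getD_prefixBits (Nat.lt_succ_of_le hy.2)]⟩
  · exact h ⟨hlo.1, Nat.le_of_lt_succ hy⟩ (by rw [← getD_prefixBits hy]; exact hlo.2)

theorem setTuringReducible_of_blocks {A B C Z : Set ℕ} {m : ℕ → ℕ} (hA : CE A) (hB : CE B)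
    (hmc : Computable m) (hgap : ∀ n, ¬ Set.Ioc (m n) (m (n + 1)) ⊆ A ∪ B)
    (hZ : ∀ n, ∀ x ∈ Set.Ioc (m n) (m (n + 1)), (x ∈ Z ↔ if n ∈ C then x ∉ B else x ∈ A)) :
    SetTuringReducible C Z := by
  obtain ⟨cA, rfl⟩ := hA
  obtain ⟨cB, rfl⟩ := hB
  refine SetTuringReducible.of_partrec (a := fun n => (m n, prefixBits Z (m (n + 1) + 1)))
    ((OComputable.id.comp hmc).pair
      ((SetTuringReducible.refl Z).oComputable.prefixBits.comp_computable
        (Computable.succ.comp (hmc.comp Computable.succ))))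
    (G := fun p => race (BlockEnumerated cB false p.1 p.2) (BlockEnumerated cA true p.1 p.2))
    (Partrec.race (primrecRel_blockEnumerated cB false) (primrecRel_blockEnumerated cA true))
    fun n => ?_
  obtain ⟨y, hy, hyAB⟩ := Set.not_subset.1 (hgap n)
  simp only [Set.mem_union, not_or, Set.mem_ofPred_eq] at hyAB
  have hZn := hZ n
  by_cases hn : n ∈ C
  · simp only [hn, if_true] at hZn
    rw [race_eq_true, chib, decide_eq_true hn]
    · exact exists_blockEnumerated_prefixBits_iff.2 fun x hx hxZ => by
        by_contra hxB; simp [chib, (hZn x hx).2 hxB] at hxZ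
    · exact fun s hs => hyAB.1 <| exists_blockEnumerated_prefixBits_iff.1 ⟨s, hs⟩ y hy
        (by simpa [chib] using (hZn y hy).2 hyAB.2)
  · simp only [hn, if_false] at hZn
    rw [race_eq_false, chib, decide_eq_false hn]
    · exact exists_blockEnumerated_prefixBits_iff.2 fun x hx hxZ =>
        (hZn x hx).1 (by simpa [chib] using hxZ)
    · exact fun s hs => hyAB.2 <| exists_blockEnumerated_prefixBits_iff.1 ⟨s, hs⟩ y hy
        (by simpa [chib] using mt (hZn y hy).1 hyAB.1)

theorem mem_iff_of_blockIndex {A B C Z : Set ℕ} {m N : ℕ → ℕ} {k : ℕ}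
    (hN : ∀ x, k < x → x ∈ Set.Ioc (m (N x)) (m (N x + 1)))
    (hZlow : ∀ x, x ≤ k → (x ∈ Z ↔ x ∈ A))
    (hZ : ∀ n, ∀ x ∈ Set.Ioc (m n) (m (n + 1)), (x ∈ Z ↔ if n ∈ C then x ∉ B else x ∈ A))
    (x : ℕ) : x ∈ Z ↔ if k < x ∧ N x ∈ C then x ∉ B else x ∈ A := by
  by_cases hx : k < x
  · simpa [hx] using hZ (N x) x (hN x hx)
  · simpa [hx] using hZlow x (not_lt.1 hx)

theorem subset_and_inter_eq_empty_of_mem_iff_ite {A B Z : Set ℕ} {p : ℕ → Prop} [DecidablePred p]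
    (hdisj : A ∩ B = ∅) (hZ : ∀ x, x ∈ Z ↔ if p x then x ∉ B else x ∈ A) :
    A ⊆ Z ∧ Z ∩ B = ∅ := by
  have hAB : ∀ x ∈ A, x ∉ B := fun x hA hB => (hdisj ▸ ⟨hA, hB⟩ : x ∈ (∅ : Set ℕ))
  refine ⟨fun x hx => ?_, Set.eq_empty_iff_forall_notMem.2 fun x ⟨hxZ, hxB⟩ => ?_⟩
  · rw [hZ]; split_ifs <;> simp_all
  · rw [hZ] at hxZ; split_ifs at hxZ <;> simp_all

theorem setTuringReducible_of_mem_iff_ite {A B C Z : Set ℕ} {f N : ℕ → ℕ} {k : ℕ}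
    (hf : Computable f) (hgt : ∀ x, x < f x) (hBA : WttReducibleWith f B A)
    (hC : SetTuringReducible A C) (hN : Computable N)
    (hZ : ∀ x, x ∈ Z ↔ if k < x ∧ N x ∈ C then x ∉ B else x ∈ A) :
    SetTuringReducible Z C := by
  obtain ⟨F, hF, hFA⟩ := hBA
  replace hFA : ∀ x, F x (prefixBits A (f x)) = Part.some (chib B x) := hFA
  refine SetTuringReducible.of_partrec (a := fun x => (x, prefixBits A (f x), chib C (N x)))
    (OComputable.id.pair ((hC.oComputable.prefixBits.comp_computable hf).pair
      ((SetTuringReducible.refl C).oComputable.comp_computable hN)))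
    (G := fun p => bif decide (k < p.1) && p.2.2 then (F p.1 p.2.1).map (!·)
      else Part.some (p.2.1.getD p.1 false)) ?_ fun x => ?_
  · exact Partrec.cond
      (Primrec.and.comp (Primrec.nat_lt.decide.comp (Primrec.const k) Primrec.fst)
        (Primrec.snd.comp Primrec.snd)).to_comp
      ((hF.comp Computable.fst (Computable.fst.comp Computable.snd)).map
        (Primrec.not.comp Primrec.snd).to_comp.to₂)
      (Primrec.list_getD false |>.comp (Primrec.fst.comp Primrec.snd) Primrec.fst).to_comp.partrec
  · by_cases h : k < x ∧ N x ∈ C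
    · have hx : x ∈ Z ↔ x ∉ B := by simpa [h] using hZ x
      by_cases hxB : x ∈ B <;> simp [h, hFA, chib, hx, hxB]
    · have hx : x ∈ Z ↔ x ∈ A := by simpa [h] using hZ x
      have hcond : (decide (k < x) && chib C (N x)) = false := by simpa [chib] using h
      simp only [hcond, cond_false, getD_prefixBits (hgt x)]
      simp [chib, hx]

theorem stmt2_general (A B : Set ℕ) (hA : CE A) (hB : CE B) (hdisj : A ∩ B = ∅)
    (f : ℕ → ℕ) (hf : Computable f) (hgt : ∀ x, x < f x)
    (hBA : WttReducibleWith f B A)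
    (k : ℕ) (hk : ∀ x, k ≤ x → ¬ Set.Ioc x (f x) ⊆ A ∪ B)
    (m : ℕ → ℕ) (hm0 : m 0 = k) (hms : ∀ i, m (i + 1) = f (m i))
    (C : Set ℕ) (hC : SetTuringReducible A C)
    (Z : Set ℕ)
    (hZlow : ∀ x, x ≤ k → (x ∈ Z ↔ x ∈ A))
    (hZ : ∀ n, ∀ x ∈ Set.Ioc (m n) (m (n + 1)),
      (x ∈ Z ↔ if n ∈ C then x ∉ B else x ∈ A)) :
    A ⊆ Z ∧ Z ∩ B = ∅ ∧ TuringEquiv Z C := by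
  subst hm0
  have hm : StrictMono m := strictMono_nat_of_lt_succ fun i => hms i ▸ hgt (m i)
  have hmc : Computable m := hf.of_succ_eq hms
  have hgap : ∀ n, ¬ Set.Ioc (m n) (m (n + 1)) ⊆ A ∪ B := fun n =>
    hms n ▸ hk (m n) (hm.monotone n.zero_le)
  obtain ⟨N, hN, hNm⟩ := hm.exists_computable_blockIndex hmc
  have hmem := mem_iff_of_blockIndex hNm hZlow hZ
  obtain ⟨hAZ, hZB⟩ := subset_and_inter_eq_empty_of_mem_iff_ite hdisj hmem
  exact ⟨hAZ, hZB, setTuringReducible_of_mem_iff_ite hf hgt hBA hC hN hmem,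
    setTuringReducible_of_blocks hA hB hmc hgap hZ⟩

/-- Case 1 of the wtt upward closure theorem: with use bound `f`, finitely
many `x` with `(x, f x] ⊆ A ∪ B`, `k` beyond all of them, `m₀ = k`, `m_{i+1} = f (m_i)`,
the set `Z` agreeing with `A` on `(m_n, m_{n+1}]` when `n ∉ C` and with `Bᶜ` when `n ∈ C`
is a separator Turing equivalent to `C`. -/
theorem stmt2 (A B : Set ℕ) (hA : CE A) (hB : CE B) (hdisj : A ∩ B = ∅)
    (f : ℕ → ℕ) (hf : Computable f) (hmono : Monotone f) (hgt : ∀ x, x < f x)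
    (hBA : WttReducibleWith f B A) (hAB : WttReducibleWith f A B)
    (hfin : { x : ℕ | Set.Ioc x (f x) ⊆ A ∪ B }.Finite)
    (k : ℕ) (hk : ∀ x, k ≤ x → ¬ Set.Ioc x (f x) ⊆ A ∪ B)
    (m : ℕ → ℕ) (hm0 : m 0 = k) (hms : ∀ i, m (i + 1) = f (m i))
    (C : Set ℕ) (hC : SetTuringReducible A C)
    (Z : Set ℕ)
    (hZlow : ∀ x, x ≤ k → (x ∈ Z ↔ x ∈ A))
    (hZ : ∀ n, ∀ x ∈ Set.Ioc (m n) (m (n + 1)),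
      (x ∈ Z ↔ if n ∈ C then x ∉ B else x ∈ A)) :
    A ⊆ Z ∧ Z ∩ B = ∅ ∧ TuringEquiv Z C :=
  stmt2_general A B hA hB hdisj f hf hgt hBA k hk m hm0 hms C hC Z hZlow hZ
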